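/- For every ε > 0, m ≥ 0, every set T ⊂ εℤ², and every point (x,t) ∈ εℤ² with (x,t) ∉ T and t ≥ 2ε: (1) a₁(x,t bypass T; m,ε) = (1/√(1+m²ε²))·(a₁(x+ε,t−ε bypass T; m,ε) + mε·a₂(x+ε,t−ε bypass T; m,ε)); and (2) a₂(x,t bypass T; m,ε) = (1/√(1+m²ε²))·(a₂(x−ε,t−ε bypass T; m,ε) − mε·a₁(x−ε,t−ε bypass T; m,ε)). -/

import Mathlib

open scoped Classical

noncomputable section

/-- The `i`-th move of a checker path encoded as `f : Fin n → Bool`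
(`true` = upwards-right move `(ε,ε)`, `false` = upwards-left move `(−ε,ε)`);
out-of-range indices default to `true`. -/
def fcStep {n : ℕ} (f : Fin n → Bool) (i : ℕ) : Bool :=
  if h : i < n then f ⟨i, h⟩ else true

/-- The number of turns of the checker path `f`. -/
def fcTurns {n : ℕ} (f : Fin n → Bool) : ℕ :=
  ((Finset.range (n - 1)).filter fun i => fcStep f i ≠ fcStep f (i + 1)).card

/-- The position (in units of `ε`) of the checker path `f` after `i` moves,
starting from the origin. -/
def fcPos {n : ℕ} (f : Fin n → Bool) (i : ℕ) : ℤ :=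
  ∑ j ∈ Finset.range i, (if fcStep f j then (1 : ℤ) else -1)

/-- Checker paths from `(0,0)` to `(εx, εn)` whose first step is to `(ε,ε)`. -/
def fcPaths (n : ℕ) (x : ℤ) : Finset (Fin n → Bool) :=
  Finset.univ.filter fun f =>
    (∀ i : Fin n, (i : ℕ) = 0 → f i = true) ∧ fcPos f n = x

/-- The amplitude `a(εx, εn, m, ε)`. -/
def fcAmp (m ε : ℝ) (x : ℤ) (n : ℕ) : ℂ :=
  (((1 + m ^ 2 * ε ^ 2) ^ ((1 - (n : ℝ)) / 2) : ℝ) : ℂ) * Complex.I *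
    ∑ f ∈ fcPaths n x, (-Complex.I * (m * ε)) ^ fcTurns f

/-- The probability `P(εx, εn, m, ε)` to find the electron at `(εx, εn)`. -/
def fcP (m ε : ℝ) (x : ℤ) (n : ℕ) : ℝ := ‖fcAmp m ε x n‖ ^ 2

/-- The amplitude `a(εx, εn bypass T; m, ε)`: as `fcAmp`, but the sum is only over
checker paths avoiding every point of the set `T ⊂ εℤ²` (a point `(X, k)` encodes
the lattice point `(εX, εk)`). -/
def fcAmpBypass (m ε : ℝ) (T : Set (ℤ × ℤ)) (x : ℤ) (n : ℕ) : ℂ :=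
  (((1 + m ^ 2 * ε ^ 2) ^ ((1 - (n : ℝ)) / 2) : ℝ) : ℂ) * Complex.I *
    ∑ f ∈ (fcPaths n x).filter (fun f => ∀ i ≤ n, (fcPos f i, (i : ℤ)) ∉ T),
      (-Complex.I * (m * ε)) ^ fcTurns f

/-! Split a path by its last move. Appending a move to a path ending at `X ∓ 1` creates a turn
exactly when it differs from the previous move, which gives a linear recursion for the sums
over paths with a prescribed last move. Since every path starts with a right move, the parity
of its number of turns records its last move; so with the purely imaginary weight `-i m ε` the
sum over paths ending with a right move is real and the other one purely imaginary, and these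
are `a₂` and `a₁` up to the normalizing factor `(1 + m²ε²)^((1 - n)/2)`. -/

open Finset

section Snoc

variable {k : ℕ} (g : Fin k → Bool) (b : Bool)

lemma fcStep_snoc_of_lt {i : ℕ} (hi : i < k) :
    fcStep (Fin.snoc g b : Fin (k + 1) → Bool) i = fcStep g i := by
  simp only [fcStep, dif_pos hi, dif_pos (Nat.lt_succ_of_lt hi)]
  exact Fin.snoc_castSucc (α := fun _ => Bool) b g ⟨i, hi⟩

lemma fcStep_snoc_self : fcStep (Fin.snoc g b : Fin (k + 1) → Bool) k = b := by
  simp only [fcStep, dif_pos (Nat.lt_succ_self k)]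
  exact Fin.snoc_last (α := fun _ => Bool) b g

lemma fcPos_snoc_of_le {i : ℕ} (hi : i ≤ k) :
    fcPos (Fin.snoc g b : Fin (k + 1) → Bool) i = fcPos g i :=
  Finset.sum_congr rfl fun j hj => by
    rw [fcStep_snoc_of_lt g b (lt_of_lt_of_le (Finset.mem_range.mp hj) hi)]

lemma fcPos_snoc_succ :
    fcPos (Fin.snoc g b : Fin (k + 1) → Bool) (k + 1) = fcPos g k + if b then 1 else -1 := by
  rw [fcPos, Finset.sum_range_succ, fcStep_snoc_self, ← fcPos, fcPos_snoc_of_le g b le_rfl]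

lemma fcTurns_snoc (hk : 1 ≤ k) :
    fcTurns (Fin.snoc g b : Fin (k + 1) → Bool) =
      fcTurns g + if fcStep g (k - 1) = b then 0 else 1 := by
  obtain ⟨j, rfl⟩ : ∃ j, k = j + 1 := ⟨k - 1, by omega⟩
  have hprefix : {i ∈ Finset.range j | fcStep (Fin.snoc g b : Fin (j + 2) → Bool) i ≠
        fcStep (Fin.snoc g b : Fin (j + 2) → Bool) (i + 1)}
      = {i ∈ Finset.range j | fcStep g i ≠ fcStep g (i + 1)} :=
    Finset.filter_congr fun i hi => by
      have hij := Finset.mem_range.mp hi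
      rw [fcStep_snoc_of_lt g b (by omega), fcStep_snoc_of_lt g b (by omega)]
  simp only [fcTurns, Nat.add_sub_cancel, Finset.range_add_one, Finset.filter_insert,
    fcStep_snoc_of_lt g b (Nat.lt_succ_self j), fcStep_snoc_self, hprefix]
  by_cases h : fcStep g j = b
  · simp [h]
  · simp [h, Finset.card_insert_of_notMem]

end Snoc

lemma even_card_filter_ne_succ_iff (s : ℕ → Bool) (N : ℕ) :
    Even #{i ∈ Finset.range N | s i ≠ s (i + 1)} ↔ s 0 = s N := by
  induction N with
  | zero => simp
  | succ N ih =>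
    rw [Finset.range_add_one, Finset.filter_insert]
    by_cases h : s N = s (N + 1)
    · rw [if_neg (not_not.mpr h), ih, h]
    · rw [if_pos h, Finset.card_insert_of_notMem (by simp), Nat.even_add_one, ih]
      revert h
      cases s 0 <;> cases s N <;> cases s (N + 1) <;> simp

lemma fcStep_zero_iff {n : ℕ} (hn : 0 < n) (f : Fin n → Bool) :
    fcStep f 0 = true ↔ ∀ i : Fin n, (i : ℕ) = 0 → f i = true := by
  refine ⟨fun h i hi => ?_, fun h => by rw [fcStep, dif_pos hn]; exact h _ rfl⟩
  rw [fcStep, dif_pos hn] at h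
  rwa [show i = ⟨0, hn⟩ from Fin.ext hi]

lemma fcStep_zero_of_mem_fcPaths {n : ℕ} {x : ℤ} {f : Fin n → Bool} (hf : f ∈ fcPaths n x) :
    fcStep f 0 = true := by
  rcases Nat.eq_zero_or_pos n with rfl | hn
  · rfl
  · exact (fcStep_zero_iff hn f).mpr (Finset.mem_filter.mp hf).2.1

lemma even_fcTurns_iff {n : ℕ} {f : Fin n → Bool} (h0 : fcStep f 0 = true) :
    Even (fcTurns f) ↔ fcStep f (n - 1) = true := by
  rw [fcTurns, even_card_filter_ne_succ_iff, h0, eq_comm]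

def fcBypassPaths (T : Set (ℤ × ℤ)) (n : ℕ) (x : ℤ) : Finset (Fin n → Bool) :=
  (fcPaths n x).filter fun f => ∀ i ≤ n, (fcPos f i, (i : ℤ)) ∉ T

lemma snoc_mem_fcBypassPaths_iff {T : Set (ℤ × ℤ)} {k : ℕ} (hk : 1 ≤ k) {X : ℤ}
    (hT : (X, (k : ℤ) + 1) ∉ T) (g : Fin k → Bool) (b : Bool) :
    (Fin.snoc g b : Fin (k + 1) → Bool) ∈ fcBypassPaths T (k + 1) X ↔
      g ∈ fcBypassPaths T k (X - if b then 1 else -1) := by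
  simp only [fcBypassPaths, fcPaths, Finset.mem_filter, Finset.mem_univ, true_and,
    ← fcStep_zero_iff (Nat.succ_pos k), ← fcStep_zero_iff hk, fcStep_snoc_of_lt g b hk,
    fcPos_snoc_succ]
  constructor
  · rintro ⟨⟨h0, hX⟩, havoid⟩
    refine ⟨⟨h0, by omega⟩, fun i hi => ?_⟩
    simpa only [fcPos_snoc_of_le g b hi] using havoid i (by omega)
  · rintro ⟨⟨h0, hX⟩, havoid⟩
    refine ⟨⟨h0, by omega⟩, fun i hi => ?_⟩
    rcases Nat.lt_or_ge i (k + 1) with hik | hik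
    · simpa only [fcPos_snoc_of_le g b (Nat.lt_succ_iff.mp hik)] using havoid i (by omega)
    · obtain rfl : i = k + 1 := le_antisymm hi hik
      rw [fcPos_snoc_succ, show fcPos g k + (if b then 1 else -1) = X by omega]
      exact_mod_cast hT

lemma sum_fcBypassPaths_succ {M : Type*} [AddCommMonoid M] {T : Set (ℤ × ℤ)} {k : ℕ}
    (hk : 1 ≤ k) {X : ℤ} (hT : (X, (k : ℤ) + 1) ∉ T) (F : (Fin (k + 1) → Bool) → M) :
    ∑ f ∈ fcBypassPaths T (k + 1) X, F f =
      ∑ b : Bool, ∑ g ∈ fcBypassPaths T k (X - if b then 1 else -1), F (Fin.snoc g b) := by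
  rw [← Fintype.sum_extend_by_zero, ← (Fin.snocEquiv fun _ => Bool).sum_comp,
    Fintype.sum_prod_type]
  refine Fintype.sum_congr _ _ fun b => ?_
  rw [← Fintype.sum_extend_by_zero (fcBypassPaths T k _)]
  exact Fintype.sum_congr _ _ fun g => if_congr (snoc_mem_fcBypassPaths_iff hk hT g b) rfl rfl

def fcLastStepSum {R : Type*} [CommSemiring R] (w : R) (T : Set (ℤ × ℤ)) (n : ℕ) (x : ℤ)
    (b : Bool) : R :=
  ∑ f ∈ fcBypassPaths T n x with fcStep f (n - 1) = b, w ^ fcTurns f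

section LastStepSum

variable {R : Type*} [CommSemiring R] (w : R) (T : Set (ℤ × ℤ)) {k : ℕ} (hk : 1 ≤ k)
include hk

lemma sum_pow_fcTurns_snoc (Y : ℤ) (b : Bool) :
    ∑ g ∈ fcBypassPaths T k Y, w ^ fcTurns (Fin.snoc g b : Fin (k + 1) → Bool) =
      fcLastStepSum w T k Y b + w * fcLastStepSum w T k Y (!b) := by
  rw [← Finset.sum_filter_add_sum_filter_not _ fun g => fcStep g (k - 1) = b, fcLastStepSum,
    fcLastStepSum, Finset.mul_sum]
  congr 1
  · refine Finset.sum_congr rfl fun g hg => ?_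
    rw [fcTurns_snoc g b hk, if_pos (Finset.mem_filter.mp hg).2, add_zero]
  · refine Finset.sum_congr (Finset.filter_congr fun g _ => by cases b <;> simp) fun g hg => ?_
    have hne : fcStep g (k - 1) ≠ b := by cases b <;> simpa using (Finset.mem_filter.mp hg).2
    rw [fcTurns_snoc g b hk, if_neg hne, pow_succ, mul_comm]

lemma fcLastStepSum_succ {X : ℤ} (hT : (X, (k : ℤ) + 1) ∉ T) (b : Bool) :
    fcLastStepSum w T (k + 1) X b =
      fcLastStepSum w T k (X - if b then 1 else -1) b +
        w * fcLastStepSum w T k (X - if b then 1 else -1) (!b) := by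
  rw [fcLastStepSum, Finset.sum_filter, sum_fcBypassPaths_succ hk hT, Fintype.sum_bool]
  simp only [Nat.add_sub_cancel, fcStep_snoc_self]
  cases b <;> simp [sum_pow_fcTurns_snoc w T hk]

end LastStepSum

lemma Complex.im_pow_of_re_eq_zero_of_even {z : ℂ} (hz : z.re = 0) {t : ℕ} (ht : Even t) :
    (z ^ t).im = 0 := by
  have hz2 : z ^ 2 = ((-z.im ^ 2 : ℝ) : ℂ) := by apply Complex.ext <;> simp [sq, hz]
  obtain ⟨j, rfl⟩ := ht
  rw [← two_mul, pow_mul, hz2, ← Complex.ofReal_pow, Complex.ofReal_im]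

lemma Complex.re_pow_of_re_eq_zero_of_odd {z : ℂ} (hz : z.re = 0) {t : ℕ} (ht : Odd t) :
    (z ^ t).re = 0 := by
  have hz2 : z ^ 2 = ((-z.im ^ 2 : ℝ) : ℂ) := by apply Complex.ext <;> simp [sq, hz]
  obtain ⟨j, rfl⟩ := ht
  rw [pow_succ, pow_mul, hz2, ← Complex.ofReal_pow, Complex.re_ofReal_mul, hz, mul_zero]

section Parity

variable {w : ℂ} (hw : w.re = 0) (T : Set (ℤ × ℤ)) (n : ℕ) (x : ℤ)
include hw

lemma fcLastStepSum_true_im : (fcLastStepSum w T n x true).im = 0 := by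
  rw [fcLastStepSum, Complex.im_sum]
  refine Finset.sum_eq_zero fun f hf => ?_
  obtain ⟨hf, hlast⟩ := Finset.mem_filter.mp hf
  have h0 := fcStep_zero_of_mem_fcPaths (Finset.mem_filter.mp hf).1
  exact Complex.im_pow_of_re_eq_zero_of_even hw ((even_fcTurns_iff h0).mpr hlast)

lemma fcLastStepSum_false_re : (fcLastStepSum w T n x false).re = 0 := by
  rw [fcLastStepSum, Complex.re_sum]
  refine Finset.sum_eq_zero fun f hf => ?_
  obtain ⟨hf, hlast⟩ := Finset.mem_filter.mp hf
  have h0 := fcStep_zero_of_mem_fcPaths (Finset.mem_filter.mp hf).1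
  refine Complex.re_pow_of_re_eq_zero_of_odd hw (Nat.not_even_iff_odd.mp fun he => ?_)
  simp [(even_fcTurns_iff h0).mp he] at hlast

end Parity

section Amplitude

variable (m ε : ℝ) (T : Set (ℤ × ℤ)) (x : ℤ) (n : ℕ)

lemma fcAmpBypass_eq_fcLastStepSum :
    fcAmpBypass m ε T x n = (((1 + m ^ 2 * ε ^ 2) ^ ((1 - (n : ℝ)) / 2) : ℝ) : ℂ) * Complex.I *
      (fcLastStepSum (-Complex.I * (m * ε)) T n x true +
        fcLastStepSum (-Complex.I * (m * ε)) T n x false) := by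
  rw [fcAmpBypass, fcLastStepSum, fcLastStepSum,
    ← Finset.sum_filter_add_sum_filter_not _ fun f => fcStep f (n - 1) = true]
  simp only [Bool.not_eq_true]
  rfl

lemma fcAmpBypass_re : (fcAmpBypass m ε T x n).re =
    -(1 + m ^ 2 * ε ^ 2) ^ ((1 - (n : ℝ)) / 2) *
      (fcLastStepSum (-Complex.I * (m * ε)) T n x false).im := by
  have hw : (-Complex.I * (m * ε)).re = 0 := by simp
  rw [fcAmpBypass_eq_fcLastStepSum]
  simp only [Complex.mul_re, Complex.mul_im, Complex.add_re, Complex.add_im, Complex.ofReal_re,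
    Complex.ofReal_im, Complex.I_re, Complex.I_im, fcLastStepSum_true_im hw]
  ring

lemma fcAmpBypass_im : (fcAmpBypass m ε T x n).im =
    (1 + m ^ 2 * ε ^ 2) ^ ((1 - (n : ℝ)) / 2) *
      (fcLastStepSum (-Complex.I * (m * ε)) T n x true).re := by
  have hw : (-Complex.I * (m * ε)).re = 0 := by simp
  rw [fcAmpBypass_eq_fcLastStepSum]
  simp only [Complex.mul_re, Complex.mul_im, Complex.add_re, Complex.add_im, Complex.ofReal_re,
    Complex.ofReal_im, Complex.I_re, Complex.I_im, fcLastStepSum_false_re hw]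
  ring

end Amplitude

lemma rpow_one_sub_succ_div_two {q : ℝ} (hq : 0 < q) (k : ℕ) :
    q ^ ((1 - ((k + 1 : ℕ) : ℝ)) / 2) = q ^ ((1 - (k : ℝ)) / 2) / √q := by
  rw [Real.sqrt_eq_rpow, ← Real.rpow_sub hq]
  congr 1
  push_cast
  ring

theorem stmt10_general (m ε : ℝ) (T : Set (ℤ × ℤ)) (X : ℤ) (n : ℕ)
    (hn : 2 ≤ n) (hT : ((X, (n : ℤ)) : ℤ × ℤ) ∉ T) :
    (fcAmpBypass m ε T X n).re
        = (1 / Real.sqrt (1 + m ^ 2 * ε ^ 2)) *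
            ((fcAmpBypass m ε T (X + 1) (n - 1)).re
              + m * ε * (fcAmpBypass m ε T (X + 1) (n - 1)).im) ∧
    (fcAmpBypass m ε T X n).im
        = (1 / Real.sqrt (1 + m ^ 2 * ε ^ 2)) *
            ((fcAmpBypass m ε T (X - 1) (n - 1)).im
              - m * ε * (fcAmpBypass m ε T (X - 1) (n - 1)).re) := by
  obtain ⟨k, rfl⟩ : ∃ k, n = k + 1 := ⟨n - 1, by omega⟩
  have hk : 1 ≤ k := by omega
  have hT' : (X, (k : ℤ) + 1) ∉ T := by exact_mod_cast hT
  have hq : 0 < 1 + m ^ 2 * ε ^ 2 := by positivity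
  simp only [Nat.add_sub_cancel, fcAmpBypass_re, fcAmpBypass_im, rpow_one_sub_succ_div_two hq,
    fcLastStepSum_succ _ T hk hT', Bool.not_true, Bool.not_false, Bool.false_eq_true, ↓reduceIte,
    sub_neg_eq_add]
  constructor <;>
  · simp only [Complex.add_re, Complex.add_im, Complex.mul_re, Complex.mul_im, Complex.neg_re,
      Complex.neg_im, Complex.I_re, Complex.I_im, Complex.ofReal_re, Complex.ofReal_im]
    field_simp
    ring

/-- Dirac equation for the amplitudes with an avoided set `T`: for a lattice point
`(x,t) = (εX, εn) ∉ T` with `t ≥ 2ε`. -/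
theorem stmt10 (m ε : ℝ) (hε : 0 < ε) (hm : 0 ≤ m) (T : Set (ℤ × ℤ)) (X : ℤ) (n : ℕ)
    (hn : 2 ≤ n) (hT : ((X, (n : ℤ)) : ℤ × ℤ) ∉ T) :
    (fcAmpBypass m ε T X n).re
        = (1 / Real.sqrt (1 + m ^ 2 * ε ^ 2)) *
            ((fcAmpBypass m ε T (X + 1) (n - 1)).re
              + m * ε * (fcAmpBypass m ε T (X + 1) (n - 1)).im) ∧
    (fcAmpBypass m ε T X n).im
        = (1 / Real.sqrt (1 + m ^ 2 * ε ^ 2)) *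
            ((fcAmpBypass m ε T (X - 1) (n - 1)).im
              - m * ε * (fcAmpBypass m ε T (X - 1) (n - 1)).re) :=
  stmt10_general m ε T X n hn hT
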